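/- arXiv:0904.1885 — 3 statements merged into one kernel-verified Lean document; each statement's English description precedes it below -/
import Mathlib

section
/- Let K(m) be a family of symmetric positive definite n×n matrices (m ≥ 1) satisfying xᵀK(m)x ≥ xᵀK(1)x ≥ m⁻¹ xᵀK(m)x for all x, and suppose the diagonals satisfy the same inequalities: xᵀ diag(K(m)) x ≥ xᵀ diag(K(1)) x ≥ m⁻¹ xᵀ diag(K(m)) x. Let A(m) = (diag K(m))^{-1/2} K(m) (diag K(m))^{-1/2} be the symmetrically scaled matrix and C₁ = λ_min(A(1)). Then λ_min(A(m)) ≥ C₁·m⁻¹ for all m ≥ 1. -/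
/-!
Write `D` for the diagonal of `K(m)`. Substituting `x = D^{1/2} z` in the Rayleigh quotient shows
that `λ_min(A(m)) ≥ c` iff `c · zᵀ D z ≤ zᵀ K(m) z` for all `z`. For `c = C₁ m⁻¹` this is the chain
`C₁ m⁻¹ zᵀ diag K(m) z ≤ C₁ zᵀ diag K(1) z ≤ zᵀ K(1) z ≤ zᵀ K(m) z`,
where `C₁ ≥ 0` because `K(1)` is positive semidefinite.
-/

open Matrix
open scoped MatrixOrder

namespace Matrix.IsHermitian

variable {ι : Type*} [Fintype ι] [DecidableEq ι] {A : Matrix ι ι ℝ}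

theorem forall_le_eigenvalues_iff (hA : A.IsHermitian) {c : ℝ} :
    (∀ i, c ≤ hA.eigenvalues i) ↔ ∀ x : ι → ℝ, c * (x ⬝ᵥ x) ≤ x ⬝ᵥ A *ᵥ x := by
  rw [← Set.forall_mem_range (p := (c ≤ ·)), ← hA.spectrum_real_eq_range_eigenvalues,
    ← algebraMap_le_iff_le_spectrum hA.isSelfAdjoint, le_iff, posSemidef_iff_dotProduct_mulVec,
    Algebra.algebraMap_eq_smul_one, and_iff_right (hA.sub (isHermitian_one.smul (.all c)))]
  simp only [sub_mulVec, dotProduct_sub, sub_nonneg, star_trivial, smul_mulVec, one_mulVec,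
    dotProduct_smul, smul_eq_mul]

theorem forall_le_eigenvalues_iff_of_diagonal_scaling {K : Matrix ι ι ℝ} (hK : ∀ i, 0 < K i i)
    (hA_def : ∀ i j, A i j = (√(K i i))⁻¹ * K i j * (√(K j j))⁻¹) (hA : A.IsHermitian) {c : ℝ} :
    (∀ i, c ≤ hA.eigenvalues i) ↔ ∀ z : ι → ℝ, c * ∑ i, K i i * z i ^ 2 ≤ z ⬝ᵥ K *ᵥ z := by
  have hs : ∀ i, √(K i i) ≠ 0 := fun i => (Real.sqrt_pos.2 (hK i)).ne'
  let scale : (ι → ℝ) ≃ (ι → ℝ) := .piCongrRight fun i => Equiv.mulLeft₀ (√(K i i)) (hs i)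
  have scale_apply (z : ι → ℝ) (i : ι) : scale z i = √(K i i) * z i := rfl
  rw [hA.forall_le_eigenvalues_iff, ← scale.forall_congr_right]
  refine forall_congr' fun z => ?_
  have hform : scale z ⬝ᵥ A *ᵥ scale z = z ⬝ᵥ K *ᵥ z := by
    simp only [scale_apply, dotProduct, mulVec, hA_def, Finset.mul_sum]
    refine Finset.sum_congr rfl fun i _ => Finset.sum_congr rfl fun j _ => ?_
    field_simp [hs i, hs j]
  have hnorm : scale z ⬝ᵥ scale z = ∑ i, K i i * z i ^ 2 := by
    refine Finset.sum_congr rfl fun i _ => ?_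
    rw [scale_apply, mul_mul_mul_comm, Real.mul_self_sqrt (hK i).le, sq]
  rw [hform, hnorm]

end Matrix.IsHermitian

theorem diag_scaled_lambda_min_lower_bound {n : ℕ}
    (K A : ℝ → Matrix (Fin n) (Fin n) ℝ)
    (hKpd : ∀ m, 1 ≤ m → (K m).PosDef)
    (hdpos : ∀ m, 1 ≤ m → ∀ i, 0 < K m i i)
    (hquad : ∀ m, 1 ≤ m → ∀ x : Fin n → ℝ,
      x ⬝ᵥ (K 1).mulVec x ≤ x ⬝ᵥ (K m).mulVec x ∧
      m⁻¹ * (x ⬝ᵥ (K m).mulVec x) ≤ x ⬝ᵥ (K 1).mulVec x)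
    (hdquad : ∀ m, 1 ≤ m → ∀ x : Fin n → ℝ,
      (∑ i, K 1 i i * (x i) ^ 2) ≤ (∑ i, K m i i * (x i) ^ 2) ∧
      m⁻¹ * (∑ i, K m i i * (x i) ^ 2) ≤ (∑ i, K 1 i i * (x i) ^ 2))
    (hAdef : ∀ m i j,
      A m i j = (Real.sqrt (K m i i))⁻¹ * K m i j * (Real.sqrt (K m j j))⁻¹)
    (hAherm : ∀ m, (A m).IsHermitian) :
    ∀ m, 1 ≤ m →
      (⨅ i, (hAherm 1).eigenvalues i) * m⁻¹ ≤ ⨅ i, (hAherm m).eigenvalues i := by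
  intro m hm
  rcases isEmpty_or_nonempty (Fin n) with hn | hn
  · simp -- both infima are `⨅` over an empty type, i.e. `0`
  have scaling (m : ℝ) (hm : 1 ≤ m) (c : ℝ) :=
    (hAherm m).forall_le_eigenvalues_iff_of_diagonal_scaling (hdpos m hm) (hAdef m) (c := c)
  set C₁ := ⨅ i, (hAherm 1).eigenvalues i
  have hC₁ := (scaling 1 le_rfl _).1 fun i => ciInf_le (Set.finite_range _).bddBelow i
  have hC₁_nonneg : 0 ≤ C₁ := le_ciInf <| (scaling 1 le_rfl _).2 fun z => by
    simpa using (hKpd 1 le_rfl).posSemidef.dotProduct_mulVec_nonneg z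
  refine le_ciInf <| (scaling m hm _).2 fun z => ?_
  calc C₁ * m⁻¹ * ∑ i, K m i i * z i ^ 2
      = C₁ * (m⁻¹ * ∑ i, K m i i * z i ^ 2) := mul_assoc ..
    _ ≤ C₁ * ∑ i, K 1 i i * z i ^ 2 := by gcongr; exact (hdquad m hm z).2
    _ ≤ z ⬝ᵥ K 1 *ᵥ z := hC₁ z
    _ ≤ z ⬝ᵥ K m *ᵥ z := (hquad m hm z).1
end

section
/- Let N be a real symmetric positive semidefinite n×n matrix with a simple zero eigenvalue whose (normalized) eigenvector is e, and let Δ(m) be symmetric matrices with Δ(m) = Δ^∞ + O(m⁻¹) in spectral norm. Define K(m) = m·N + Δ(m) and suppose K(m) is invertible for large m and η := eᵀΔ^∞ e > 0. Then K(m)^{-1} = e·η^{-1}·eᵀ + O(m⁻¹) in spectral norm as m → ∞. -/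
/-!
With `P = e eᵀ`, the matrix `N + P` is positive definite and `R = (N + P)⁻¹` satisfies
`N R = 1 - P`. The first-order ansatz `X m = η⁻¹ P + m⁻¹ R (1 - η⁻¹ Δ∞ P)` then gives
`K m * X m = 1 + O(m⁻¹)`: the `O(1)` terms cancel because `N P = 0` and `P Δ∞ P = η P`.
Since `(1 + E)⁻¹ = 1 + O(‖E‖)` near `E = 0`, it follows that
`(K m)⁻¹ = X m (1 + O(m⁻¹)) = η⁻¹ P + O(m⁻¹)`.
-/

open Matrix Filter Topology Asymptotics
open scoped Matrix.Norms.L2Operator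

theorem isBigO_inv_atTop_iff {E : Type*} [SeminormedAddCommGroup E] {f : ℝ → E} :
    f =O[atTop] (fun m ↦ m⁻¹) ↔ ∃ C M : ℝ, ∀ m ≥ M, ‖f m‖ ≤ C / m := by
  have hnorm : ∀ C m : ℝ, 0 < m → C * ‖m⁻¹‖ = C / m := fun C m hm ↦ by
    rw [norm_inv, Real.norm_of_nonneg hm.le, div_eq_mul_inv]
  constructor
  · intro h
    obtain ⟨C, hC⟩ := h.bound
    obtain ⟨M, hM⟩ := eventually_atTop.mp (hC.and (eventually_gt_atTop 0))
    exact ⟨C, M, fun m hm ↦ hnorm C m (hM m hm).2 ▸ (hM m hm).1⟩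
  · rintro ⟨C, M, hCM⟩
    refine IsBigO.of_bound C ?_
    filter_upwards [eventually_ge_atTop M, eventually_gt_atTop 0] with m hmM hm
    exact hnorm C m hm ▸ hCM m hmM

section

variable {ι : Type*} [Fintype ι] {N : Matrix ι ι ℝ} {e : ι → ℝ}

theorem Matrix.PosSemidef.posDef_add_vecMulVec_self (hN : N.PosSemidef)
    (hker : ∀ x, N *ᵥ x = 0 → ∃ c : ℝ, x = c • e) : (N + vecMulVec e e).PosDef := by
  have hP : (vecMulVec e e).PosSemidef := by simpa using posSemidef_vecMulVec_self_star e
  refine posDef_iff_dotProduct_mulVec.mpr ⟨hN.1.add hP.1, fun x hx ↦ ?_⟩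
  have hNx : 0 ≤ x ⬝ᵥ N *ᵥ x := by simpa using hN.dotProduct_mulVec_nonneg x
  have hPx : x ⬝ᵥ vecMulVec e e *ᵥ x = (e ⬝ᵥ x) ^ 2 := by
    simp [vecMulVec_mulVec, dotProduct_comm x e, sq]
  simp only [star_trivial, add_mulVec, dotProduct_add, hPx]
  rcases hNx.lt_or_eq with hpos | hzero
  · positivity
  obtain ⟨c, rfl⟩ := hker x ((hN.dotProduct_mulVec_zero_iff x).mp (by simpa using hzero.symm))
  have hc : c ≠ 0 := by rintro rfl; simp at hx
  have he : e ≠ 0 := by rintro rfl; simp at hx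
  rw [← hzero, zero_add, dotProduct_smul, smul_eq_mul]
  have : e ⬝ᵥ e ≠ 0 := by simpa [dotProduct_self_eq_zero] using he
  positivity

theorem Matrix.mul_inv_add_vecMulVec_self [DecidableEq ι] (hN : N.IsHermitian) (hker : N *ᵥ e = 0)
    (he : e ⬝ᵥ e = 1) (hdet : IsUnit (N + vecMulVec e e).det) :
    N * (N + vecMulVec e e)⁻¹ = 1 - vecMulVec e e := by
  have hPN : vecMulVec e e * (N + vecMulVec e e) = vecMulVec e e := by
    rw [mul_add, vecMulVec_mul, vecMulVec_mul_vecMulVec, ← mulVec_transpose,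
      ← conjTranspose_eq_transpose_of_trivial, hN.eq, hker, he]
    simp
  have hPM : vecMulVec e e * (N + vecMulVec e e)⁻¹ = vecMulVec e e := by
    calc vecMulVec e e * (N + vecMulVec e e)⁻¹
        = vecMulVec e e * (N + vecMulVec e e) * (N + vecMulVec e e)⁻¹ := by rw [hPN]
      _ = vecMulVec e e := by rw [mul_assoc, mul_nonsing_inv _ hdet, mul_one]
  calc N * (N + vecMulVec e e)⁻¹
      = (N + vecMulVec e e) * (N + vecMulVec e e)⁻¹ - vecMulVec e e * (N + vecMulVec e e)⁻¹ := by
        rw [← sub_mul, add_sub_cancel_right]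
    _ = 1 - vecMulVec e e := by rw [mul_nonsing_inv _ hdet, hPM]

end

theorem Matrix.vecMulVec_mul_mul_vecMulVec {ι R : Type*} [Fintype ι] [CommSemiring R]
    (u v w x : ι → R) (A : Matrix ι ι R) :
    vecMulVec u v * (A * vecMulVec w x) = (v ⬝ᵥ A *ᵥ w) • vecMulVec u x := by
  rw [mul_vecMulVec, vecMulVec_mul_vecMulVec, vecMulVec_smul]

section

variable {A : Type*} [Ring A] [Algebra ℝ A]

theorem mul_mul_one_sub_inv_smul_mul {N M P D : A} {η : ℝ} (hη : η ≠ 0) (hNM : N * M = 1 - P)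
    (hPDP : P * (D * P) = η • P) :
    N * (M * (1 - η⁻¹ • (D * P))) = 1 - η⁻¹ • (D * P) := by
  rw [← mul_assoc, hNM, sub_mul, one_mul, mul_sub, mul_one, mul_smul_comm, hPDP, smul_smul,
    inv_mul_cancel₀ hη, one_smul]
  abel

theorem smul_add_mul_inv_smul_add_sub_one {N P Y D D₀ : A} {m η : ℝ} (hm : m ≠ 0)
    (hNP : N * P = 0) (hNY : N * Y = 1 - η⁻¹ • (D₀ * P)) :
    (m • N + D) * (η⁻¹ • P + m⁻¹ • Y) - 1 = η⁻¹ • ((D - D₀) * P) + m⁻¹ • (D * Y) := by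
  rw [add_mul, mul_add, mul_add, smul_mul_smul, smul_mul_smul, hNP, hNY, mul_inv_cancel₀ hm,
    one_smul, smul_zero, mul_smul_comm, mul_smul_comm, sub_mul, smul_sub]
  abel

end

theorem isBigO_smul_sub_mul_add_inv_smul_mul {A : Type*} [NormedRing A] [NormedAlgebra ℝ A]
    {D : ℝ → A} {D₀ : A} (c : ℝ) (P Y : A) (hD : (fun m ↦ D m - D₀) =O[atTop] fun m ↦ m⁻¹) :
    (fun m ↦ c • ((D m - D₀) * P) + m⁻¹ • (D m * Y)) =O[atTop] fun m ↦ m⁻¹ := by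
  have hDbdd : D =O[atTop] fun _ ↦ (1 : ℝ) := Tendsto.isBigO_one ℝ (c := D₀) <| by
    simpa using (hD.trans_tendsto tendsto_inv_atTop_zero).add_const D₀
  have hDY : (fun m ↦ D m * Y) =O[atTop] fun _ ↦ (1 : ℝ) := by
    simpa using hDbdd.mul (isBigO_const_one ℝ Y atTop)
  simpa using ((hD.mul (isBigO_const_one ℝ P atTop)).const_smul_left c).add
    ((isBigO_refl (fun m : ℝ ↦ m⁻¹) atTop).smul hDY)

theorem Matrix.inv_sub_isBigO_of_mul_sub_one_isBigO {α ι 𝕜 : Type*} [RCLike 𝕜] [Fintype ι]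
    [DecidableEq ι] {l : Filter α} {K X : α → Matrix ι ι 𝕜} {X₀ : Matrix ι ι 𝕜} {g : α → ℝ}
    (hg : Tendsto g l (𝓝 0)) (hX : (fun a ↦ X a - X₀) =O[l] g)
    (hKX : (fun a ↦ K a * X a - 1) =O[l] g) :
    (fun a ↦ (K a)⁻¹ - X₀) =O[l] g := by
  set E := fun a ↦ K a * X a - 1
  have hE : Tendsto E l (𝓝 0) := hKX.trans_tendsto hg
  have hunit : ∀ᶠ a in l, IsUnit (1 + E a) := by
    have h1 : Tendsto (fun a ↦ 1 + E a) l (𝓝 1) := by simpa using hE.const_add 1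
    exact h1.eventually_mem (Units.isOpen.mem_nhds isUnit_one)
  have hinv : ∀ᶠ a in l, (K a)⁻¹ = X a * Ring.inverse (1 + E a) := hunit.mono fun a ha ↦
    inv_eq_right_inv <| by
      rw [← mul_assoc, show K a * X a = 1 + E a by simp [E], Ring.mul_inverse_cancel _ ha]
  have hdiff : (fun a ↦ Ring.inverse (1 + E a) - 1) =O[l] g := by
    have h := (NormedRing.inverse_add_norm_diff_first_order (1 : (Matrix ι ι 𝕜)ˣ)).comp_tendsto hE
    simp only [Units.val_one, inv_one] at h
    exact h.trans (isBigO_norm_left.mpr hKX)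
  have hXbdd : X =O[l] fun _ ↦ (1 : ℝ) :=
    Tendsto.isBigO_one ℝ (c := X₀) (by simpa using (hX.trans_tendsto hg).add_const X₀)
  have hprod : (fun a ↦ X a * (Ring.inverse (1 + E a) - 1)) =O[l] g := by
    simpa using hXbdd.mul hdiff
  refine (hprod.add hX).congr' (hinv.mono fun a ha ↦ ?_) .rfl
  simp only [ha]
  noncomm_ring

theorem KHH_inverse_asymptotics_general {n : ℕ} (N Δinf : Matrix (Fin n) (Fin n) ℝ)
    (Δ : ℝ → Matrix (Fin n) (Fin n) ℝ)
    (hN : N.PosSemidef) (e : Fin n → ℝ) (he : e ⬝ᵥ e = 1)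
    (hker : N.mulVec e = 0)
    (hsimple : ∀ x, N.mulVec x = 0 → ∃ c : ℝ, x = c • e)
    (hΔ : ∃ C M : ℝ, ∀ m ≥ M, ‖Δ m - Δinf‖ ≤ C / m)
    (K : ℝ → Matrix (Fin n) (Fin n) ℝ) (hK : ∀ m, K m = m • N + Δ m)
    (η : ℝ) (hη : η = e ⬝ᵥ Δinf.mulVec e) (hηpos : 0 < η) :
    ∃ C M : ℝ, ∀ m ≥ M, ‖(K m)⁻¹ - η⁻¹ • Matrix.vecMulVec e e‖ ≤ C / m := by
  set P := vecMulVec e e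
  have hdet : IsUnit (N + P).det :=
    (isUnit_iff_isUnit_det _).mp (hN.posDef_add_vecMulVec_self hsimple).isUnit
  set Y := (N + P)⁻¹ * (1 - η⁻¹ • (Δinf * P))
  have hNP : N * P = 0 := by simp [P, mul_vecMulVec, hker]
  have hNY : N * Y = 1 - η⁻¹ • (Δinf * P) :=
    mul_mul_one_sub_inv_smul_mul hηpos.ne' (mul_inv_add_vecMulVec_self hN.1 hker he hdet)
      (by rw [vecMulVec_mul_mul_vecMulVec, ← hη])
  have hKX : (fun m ↦ K m * (η⁻¹ • P + m⁻¹ • Y) - 1) =O[atTop] fun m ↦ m⁻¹ := by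
    refine (isBigO_smul_sub_mul_add_inv_smul_mul η⁻¹ P Y (isBigO_inv_atTop_iff.mpr hΔ)).congr'
      ((eventually_ne_atTop 0).mono fun m hm ↦ ?_) .rfl
    simp only [hK, smul_add_mul_inv_smul_add_sub_one hm hNP hNY]
  refine isBigO_inv_atTop_iff.mp (inv_sub_isBigO_of_mul_sub_one_isBigO tendsto_inv_atTop_zero
    ?_ hKX)
  simpa using (isBigO_refl (fun m : ℝ ↦ m⁻¹) atTop).smul (isBigO_const_one ℝ Y atTop)

theorem KHH_inverse_asymptotics {n : ℕ} (N Δinf : Matrix (Fin n) (Fin n) ℝ)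
    (Δ : ℝ → Matrix (Fin n) (Fin n) ℝ)
    (hN : N.PosSemidef) (e : Fin n → ℝ) (he : e ⬝ᵥ e = 1)
    (hker : N.mulVec e = 0)
    (hsimple : ∀ x, N.mulVec x = 0 → ∃ c : ℝ, x = c • e)
    (hΔsym : ∀ m, (Δ m).IsHermitian)
    (hΔ : ∃ C M : ℝ, ∀ m ≥ M, ‖Δ m - Δinf‖ ≤ C / m)
    (K : ℝ → Matrix (Fin n) (Fin n) ℝ) (hK : ∀ m, K m = m • N + Δ m)
    (hinv : ∃ M₀ : ℝ, ∀ m ≥ M₀, IsUnit (K m).det)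
    (η : ℝ) (hη : η = e ⬝ᵥ Δinf.mulVec e) (hηpos : 0 < η) :
    ∃ C M : ℝ, ∀ m ≥ M, ‖(K m)⁻¹ - η⁻¹ • Matrix.vecMulVec e e‖ ≤ C / m :=
  KHH_inverse_asymptotics_general N Δinf Δ hN e he hker hsimple hΔ K hK η hη hηpos
end

section
/- Let K(m) be an invertible 2×2 block system [[K_HH(m), K_HL(m)],[K_LH(m), K_LL(m)]] with right-hand side (b_H, b_L), such that K_HH(m)^{-1} = e_H η^{-1} e_Hᵀ + O(m⁻¹), the Schur complement satisfies S(m)^{-1} = (S^∞)^{-1} + O(m⁻¹) with S^∞ invertible, and K_HL(m) = K_HL^∞ + O(m⁻¹), K_LH(m) = K_LH^∞ + O(m⁻¹). Then the solution block x_H(m) satisfies x_H(m) = c_H·e_H + O(m⁻¹) where c_H = η^{-1} e_Hᵀ (b_H − K_HL^∞ x_L^∞) and x_L^∞ = (S^∞)^{-1}(b_L − K_LH^∞ e_H η^{-1} e_Hᵀ b_H); i.e., asymptotically the solution over the highly-diffusive island is a constant vector. -/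
/-!
Block elimination writes `x_L` and `x_H` as iterated matrix–vector products of data that converge
at rate `1/m`. A bounded bilinear map sends two sequences converging at a bounded rate `r` to one
converging at rate `r`, so `x_H` converges at rate `1/m` to `P (b_H - K_HL^∞ x_L^∞)` with
`P = η⁻¹ e_H e_Hᵀ`, and this limit is a multiple of `e_H`.
-/

open Matrix
open scoped Matrix.Norms.L2Operator

open Asymptotics Filter

section Rate

variable {α 𝕜 E F G : Type*} [SeminormedAddCommGroup E] [SeminormedAddCommGroup F]
  [SeminormedAddCommGroup G] {l : Filter α} {r : α → ℝ}

def TendstoAtRate (l : Filter α) (r : α → ℝ) (f : α → E) (a : E) : Prop :=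
  (fun x => f x - a) =O[l] r

namespace TendstoAtRate

lemma const (a : E) : TendstoAtRate l r (fun _ => a) a := by
  simpa [TendstoAtRate] using isBigO_zero r l

lemma congr {f g : α → E} {a : E} (hf : TendstoAtRate l r f a) (hfg : f =ᶠ[l] g) :
    TendstoAtRate l r g a :=
  hf.congr' (hfg.sub EventuallyEq.rfl) EventuallyEq.rfl

lemma sub {f g : α → E} {a b : E} (hf : TendstoAtRate l r f a) (hg : TendstoAtRate l r g b) :
    TendstoAtRate l r (fun x => f x - g x) (a - b) :=
  (IsBigO.sub hf hg).congr_left fun _ => sub_sub_sub_comm _ _ _ _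

lemma isBigO_one {f : α → E} {a : E} (hf : TendstoAtRate l r f a)
    (hr : r =O[l] fun _ => (1 : ℝ)) : f =O[l] fun _ => (1 : ℝ) :=
  ((hf.trans hr).add (isBigO_const_const a one_ne_zero l)).congr_left fun _ => sub_add_cancel _ _

lemma bilinear [NontriviallyNormedField 𝕜] [NormedSpace 𝕜 E] [NormedSpace 𝕜 F] [NormedSpace 𝕜 G]
    (B : E →L[𝕜] F →L[𝕜] G) (hr : r =O[l] fun _ => (1 : ℝ)) {f : α → E} {g : α → F} {a : E}
    {b : F} (hf : TendstoAtRate l r f a) (hg : TendstoAtRate l r g b) :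
    TendstoAtRate l r (fun x => B (f x) (g x)) (B a b) := by
  have h₁ : (fun x => B (f x - a) (g x)) =O[l] r :=
    B.isBoundedBilinearMap.isBigO_comp.trans
      ((hf.norm_left.mul (hg.isBigO_one hr).norm_left).congr_right fun _ => mul_one _)
  have h₂ : (fun x => B a (g x - b)) =O[l] r := ((B a).isBigO_comp _ l).trans hg
  refine (h₁.add h₂).congr_left fun x => ?_
  simp only [map_sub, _root_.sub_apply]
  abel

lemma mulVec [RCLike 𝕜] {m n : Type*} [Fintype m] [Fintype n] [DecidableEq n]
    (hr : r =O[l] fun _ => (1 : ℝ)) {A : α → Matrix m n 𝕜} {v : α → n → 𝕜} {A₀ : Matrix m n 𝕜}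
    {v₀ : n → 𝕜} (hA : TendstoAtRate l r A A₀) (hv : TendstoAtRate l r v v₀) :
    TendstoAtRate l r (fun x => A x *ᵥ v x) (A₀ *ᵥ v₀) :=
  bilinear (mulVecBilin 𝕜 𝕜 : Matrix m n 𝕜 →ₗ[𝕜] _ →ₗ[𝕜] _).toContinuousBilinearMap hr hA hv

end TendstoAtRate

lemma tendstoAtRate_inv_iff {f : ℝ → E} {a : E} :
    TendstoAtRate atTop (fun m => m⁻¹) f a ↔ ∃ C M : ℝ, ∀ m ≥ M, ‖f m - a‖ ≤ C / m := by
  have hinv : ∀ᶠ m : ℝ in atTop, ∀ C : ℝ, C * ‖m⁻¹‖ = C / m :=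
    (eventually_gt_atTop 0).mono fun m hm C => by
      rw [norm_inv, Real.norm_of_nonneg hm.le, div_eq_mul_inv]
  simp only [TendstoAtRate, isBigO_iff]
  constructor
  · rintro ⟨C, hC⟩
    exact ⟨C, eventually_atTop.1 ((hC.and hinv).mono fun m hm => hm.2 C ▸ hm.1)⟩
  · rintro ⟨C, hC⟩
    exact ⟨C, ((eventually_atTop.2 hC).and hinv).mono fun m hm => (hm.2 C).symm ▸ hm.1⟩

end Rate

namespace Matrix

variable {R m n : Type*} [CommRing R] [Fintype m] [DecidableEq m] [Fintype n]

lemma eq_inv_mulVec_of_mulVec_eq {A : Matrix m m R} (hA : IsUnit A.det) {x b : m → R}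
    (h : A *ᵥ x = b) : x = A⁻¹ *ᵥ b := by
  rw [← h, mulVec_mulVec, nonsing_inv_mul A hA, one_mulVec]

variable {A : Matrix m m R} {B : Matrix m n R} {C : Matrix n m R} {D : Matrix n n R}
  {x b : m → R} {y c : n → R}

lemma blockSystem_fst_eq (hA : IsUnit A.det) (h₁ : A *ᵥ x + B *ᵥ y = b) :
    x = A⁻¹ *ᵥ (b - B *ᵥ y) :=
  eq_inv_mulVec_of_mulVec_eq hA (eq_sub_of_add_eq h₁)

lemma blockSystem_snd_eq [DecidableEq n] (hA : IsUnit A.det) (hS : IsUnit (D - C * A⁻¹ * B).det)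
    (h₁ : A *ᵥ x + B *ᵥ y = b) (h₂ : C *ᵥ x + D *ᵥ y = c) :
    y = (D - C * A⁻¹ * B)⁻¹ *ᵥ (c - C *ᵥ (A⁻¹ *ᵥ b)) := by
  refine eq_inv_mulVec_of_mulVec_eq hS ?_
  rw [← h₂, blockSystem_fst_eq hA h₁, sub_mulVec, ← mulVec_mulVec, ← mulVec_mulVec, mulVec_sub,
    mulVec_sub]
  abel

end Matrix

theorem island_solution_constant_general {nH nL : ℕ}
    (K_HH : ℝ → Matrix (Fin nH) (Fin nH) ℝ)
    (K_HL : ℝ → Matrix (Fin nH) (Fin nL) ℝ)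
    (K_LH : ℝ → Matrix (Fin nL) (Fin nH) ℝ)
    (K_LL : ℝ → Matrix (Fin nL) (Fin nL) ℝ)
    (b_H : Fin nH → ℝ) (b_L : Fin nL → ℝ)
    (x_H : ℝ → Fin nH → ℝ) (x_L : ℝ → Fin nL → ℝ)
    (hsolve : ∀ m ≥ (1 : ℝ),
      (K_HH m).mulVec (x_H m) + (K_HL m).mulVec (x_L m) = b_H ∧
      (K_LH m).mulVec (x_H m) + (K_LL m).mulVec (x_L m) = b_L)
    (e_H : Fin nH → ℝ) (η : ℝ)
    (hKHHdet : ∀ m ≥ (1 : ℝ), IsUnit (K_HH m).det)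
    (hKHHinv : ∃ C M : ℝ, ∀ m ≥ M,
      ‖(K_HH m)⁻¹ - η⁻¹ • Matrix.vecMulVec e_H e_H‖ ≤ C / m)
    (S : ℝ → Matrix (Fin nL) (Fin nL) ℝ)
    (hS : ∀ m, S m = K_LL m - K_LH m * (K_HH m)⁻¹ * K_HL m)
    (hSdet : ∀ m ≥ (1 : ℝ), IsUnit (S m).det)
    (Sinf : Matrix (Fin nL) (Fin nL) ℝ)
    (hSinv : ∃ C M : ℝ, ∀ m ≥ M, ‖(S m)⁻¹ - Sinf⁻¹‖ ≤ C / m)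
    (K_HLinf : Matrix (Fin nH) (Fin nL) ℝ)
    (hKHL : ∃ C M : ℝ, ∀ m ≥ M, ‖K_HL m - K_HLinf‖ ≤ C / m)
    (K_LHinf : Matrix (Fin nL) (Fin nH) ℝ)
    (hKLH : ∃ C M : ℝ, ∀ m ≥ M, ‖K_LH m - K_LHinf‖ ≤ C / m)
    (x_Linf : Fin nL → ℝ)
    (hxLinf : x_Linf =
      Sinf⁻¹.mulVec (b_L - (K_LHinf * (η⁻¹ • Matrix.vecMulVec e_H e_H)).mulVec b_H))
    (c_H : ℝ)
    (hcH : c_H = η⁻¹ * (e_H ⬝ᵥ (b_H - K_HLinf.mulVec x_Linf))) :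
    ∃ C M : ℝ, ∀ m ≥ M, ‖x_H m - c_H • e_H‖ ≤ C / m := by
  have hr : (fun m : ℝ => m⁻¹) =O[atTop] fun _ => (1 : ℝ) := tendsto_inv_atTop_zero.isBigO_one ℝ
  have hKHHinv' := tendstoAtRate_inv_iff.2 hKHHinv
  have hKLH' := tendstoAtRate_inv_iff.2 hKLH
  have hKHL' := tendstoAtRate_inv_iff.2 hKHL
  have hSinv' := tendstoAtRate_inv_iff.2 hSinv
  have hx_L : TendstoAtRate atTop (fun m => m⁻¹) x_L x_Linf := by
    rw [hxLinf, ← mulVec_mulVec]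
    refine (hSinv'.mulVec hr ((TendstoAtRate.const b_L).sub
      (hKLH'.mulVec hr (hKHHinv'.mulVec hr (TendstoAtRate.const b_H))))).congr ?_
    filter_upwards [eventually_ge_atTop 1] with m hm
    have hSm := hS m ▸ hSdet m hm
    rw [hS m]
    exact (blockSystem_snd_eq (hKHHdet m hm) hSm (hsolve m hm).1 (hsolve m hm).2).symm
  have hx_H : TendstoAtRate atTop (fun m => m⁻¹) x_H (c_H • e_H) := by
    have hlim : c_H • e_H = (η⁻¹ • vecMulVec e_H e_H) *ᵥ (b_H - K_HLinf *ᵥ x_Linf) := by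
      rw [hcH, smul_mulVec, vecMulVec_mulVec, op_smul_eq_smul, smul_smul]
    rw [hlim]
    refine (hKHHinv'.mulVec hr ((TendstoAtRate.const b_H).sub (hKHL'.mulVec hr hx_L))).congr ?_
    filter_upwards [eventually_ge_atTop 1] with m hm
    exact (blockSystem_fst_eq (hKHHdet m hm) (hsolve m hm).1).symm
  exact tendstoAtRate_inv_iff.1 hx_H

theorem island_solution_constant {nH nL : ℕ}
    (K_HH : ℝ → Matrix (Fin nH) (Fin nH) ℝ)
    (K_HL : ℝ → Matrix (Fin nH) (Fin nL) ℝ)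
    (K_LH : ℝ → Matrix (Fin nL) (Fin nH) ℝ)
    (K_LL : ℝ → Matrix (Fin nL) (Fin nL) ℝ)
    (b_H : Fin nH → ℝ) (b_L : Fin nL → ℝ)
    (x_H : ℝ → Fin nH → ℝ) (x_L : ℝ → Fin nL → ℝ)
    (hsolve : ∀ m ≥ (1 : ℝ),
      (K_HH m).mulVec (x_H m) + (K_HL m).mulVec (x_L m) = b_H ∧
      (K_LH m).mulVec (x_H m) + (K_LL m).mulVec (x_L m) = b_L)
    (e_H : Fin nH → ℝ) (η : ℝ) (hηpos : 0 < η)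
    (hKHHdet : ∀ m ≥ (1 : ℝ), IsUnit (K_HH m).det)
    (hKHHinv : ∃ C M : ℝ, ∀ m ≥ M,
      ‖(K_HH m)⁻¹ - η⁻¹ • Matrix.vecMulVec e_H e_H‖ ≤ C / m)
    (S : ℝ → Matrix (Fin nL) (Fin nL) ℝ)
    (hS : ∀ m, S m = K_LL m - K_LH m * (K_HH m)⁻¹ * K_HL m)
    (hSdet : ∀ m ≥ (1 : ℝ), IsUnit (S m).det)
    (Sinf : Matrix (Fin nL) (Fin nL) ℝ) (hSinfdet : IsUnit Sinf.det)
    (hSinv : ∃ C M : ℝ, ∀ m ≥ M, ‖(S m)⁻¹ - Sinf⁻¹‖ ≤ C / m)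
    (K_HLinf : Matrix (Fin nH) (Fin nL) ℝ)
    (hKHL : ∃ C M : ℝ, ∀ m ≥ M, ‖K_HL m - K_HLinf‖ ≤ C / m)
    (K_LHinf : Matrix (Fin nL) (Fin nH) ℝ)
    (hKLH : ∃ C M : ℝ, ∀ m ≥ M, ‖K_LH m - K_LHinf‖ ≤ C / m)
    (x_Linf : Fin nL → ℝ)
    (hxLinf : x_Linf =
      Sinf⁻¹.mulVec (b_L - (K_LHinf * (η⁻¹ • Matrix.vecMulVec e_H e_H)).mulVec b_H))
    (c_H : ℝ)
    (hcH : c_H = η⁻¹ * (e_H ⬝ᵥ (b_H - K_HLinf.mulVec x_Linf))) :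
    ∃ C M : ℝ, ∀ m ≥ M, ‖x_H m - c_H • e_H‖ ≤ C / m :=
  island_solution_constant_general K_HH K_HL K_LH K_LL b_H b_L x_H x_L hsolve e_H η hKHHdet hKHHinv
    S hS hSdet Sinf hSinv K_HLinf hKHL K_LHinf hKLH x_Linf hxLinf c_H hcH
end
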